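/- arXiv:2210.05445 — 2 statements merged into one kernel-verified Lean document; each statement's English description precedes it below -/
import Mathlib

section
/- The logarithm of the Gamma function satisfies the Legendre series log Γ(1−t) = γ_EM · t + Σ_{n=2}^∞ (ζ(n)/n) t^n for all complex t with |t| < 1, where γ_EM is the Euler–Mascheroni constant and ζ is the Riemann zeta function. -/
open Complex Filter Topology Finset

theorem aux_summable (t : ℂ) (ht : ‖t‖ < 1) :
    Summable (fun p : ℕ × ℕ => (t / (p.2 + 1)) ^ (p.1 + 2) / ((p.1 : ℂ) + 2)) := by
  apply Summable.of_norm
  have hf : Summable (fun k : ℕ => ‖t‖ ^ (k + 2)) := by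
    have := (summable_geometric_of_lt_one (norm_nonneg t) ht).mul_right (‖t‖ ^ 2)
    exact this.congr fun k => by rw [pow_add]
  have hg : Summable (fun j : ℕ => (((j : ℝ) + 1) ^ 2)⁻¹) := by
    have h0 : Summable (fun j : ℕ => ((j : ℝ) ^ 2)⁻¹) := by
      simpa [one_div] using Real.summable_one_div_nat_pow.mpr (by norm_num : 1 < 2)
    exact ((summable_nat_add_iff 1).mpr h0).congr fun j => by push_cast; ring_nf
  have hmaj := Summable.mul_of_nonneg hf hg (fun k => by positivity) (fun j => by positivity)
  refine hmaj.of_nonneg_of_le (fun p => norm_nonneg _) fun p => ?_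
  obtain ⟨k, j⟩ := p
  have h1 : (0:ℝ) < (j:ℝ) + 1 := by positivity
  have hn2 : ‖((k:ℂ) + 2)‖ = (k:ℝ) + 2 := by
    rw [show ((k:ℂ)+2) = ((k+2 : ℕ) : ℂ) by push_cast; ring, Complex.norm_natCast]
    push_cast; ring
  have hj : ‖((j:ℂ) + 1)‖ = (j:ℝ) + 1 := by
    rw [show ((j:ℂ)+1) = ((j+1 : ℕ) : ℂ) by push_cast; ring, Complex.norm_natCast]
    push_cast; ring
  rw [norm_div, norm_pow, norm_div, hn2, hj, div_pow]
  calc ‖t‖ ^ (k+2) / ((j:ℝ)+1) ^ (k+2) / ((k:ℝ)+2)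
      ≤ ‖t‖ ^ (k+2) / ((j:ℝ)+1) ^ (k+2) := div_le_self (by positivity) (by push_cast; linarith)
    _ ≤ ‖t‖ ^ (k+2) / ((j:ℝ)+1) ^ 2 :=
        div_le_div_of_nonneg_left (by positivity) (by positivity)
          (pow_le_pow_right₀ (by linarith) (by omega))
    _ = ‖t‖ ^ (k+2) * (((j:ℝ)+1) ^ 2)⁻¹ := by rw [div_eq_mul_inv]

theorem aux_fiber (t : ℂ) (k : ℕ) :
    riemannZeta ((k : ℂ) + 2) / ((k : ℂ) + 2) * t ^ (k + 2) =
      ∑' j : ℕ, (t / (j + 1)) ^ (k + 2) / ((k : ℂ) + 2) := by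
  have hre : 1 < Complex.re ((k : ℂ) + 2) := by
    simp only [Complex.add_re, Complex.natCast_re, Complex.re_ofNat]
    have : (0:ℝ) ≤ (k:ℝ) := Nat.cast_nonneg k
    linarith
  have hz := zeta_eq_tsum_one_div_nat_add_one_cpow hre
  have hc : ∀ j : ℕ, ((j : ℂ) + 1) ^ ((k : ℂ) + 2) = ((j : ℂ) + 1) ^ (k + 2) := by
    intro j
    rw [show ((k:ℂ) + 2) = ((k + 2 : ℕ) : ℂ) by push_cast; ring, Complex.cpow_natCast]
  rw [hz]
  simp_rw [hc]
  rw [tsum_div_const, div_mul_eq_mul_div, ← tsum_mul_right]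
  congr 1
  exact tsum_congr fun j => by rw [div_pow]; ring

theorem aux_log (j : ℕ) (t : ℂ) (ht : ‖t‖ < 1) :
    HasSum (fun k : ℕ => (t / (j + 1)) ^ (k + 2) / ((k : ℂ) + 2))
      (-Complex.log (1 - t / (j + 1)) - t / (j + 1)) := by
  set z : ℂ := t / (j + 1) with hz
  have hzn : ‖z‖ < 1 := by
    rw [hz, norm_div]
    have h1 : (1:ℝ) ≤ ‖((j:ℂ) + 1)‖ := by
      rw [show ((j:ℂ)+1) = ((j+1 : ℕ) : ℂ) by push_cast; ring, Complex.norm_natCast]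
      exact_mod_cast Nat.one_le_iff_ne_zero.mpr (Nat.succ_ne_zero j)
    calc ‖t‖ / ‖((j:ℂ) + 1)‖ ≤ ‖t‖ / 1 := by
          apply div_le_div_of_nonneg_left (norm_nonneg t) one_pos h1 |>.trans
          · exact le_refl _
      _ < 1 := by rwa [div_one]
  have H := hasSum_taylorSeries_neg_log hzn
  have H2 := (hasSum_nat_add_iff' 2).mpr H
  have he : ∀ k : ℕ, z ^ (k + 2) / ((k + 2 : ℕ) : ℂ) = z ^ (k + 2) / ((k : ℂ) + 2) := by
    intro k; push_cast; ring_nf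
  refine HasSum.congr_fun ?_ (fun k => (he k).symm) |>.congr_fun fun k => rfl
  convert H2 using 1
  · rfl
  simp [Finset.sum_range_succ]

theorem aux_ne (t : ℂ) (ht : ‖t‖ < 1) (i : ℕ) : (1 : ℂ) - t / (i + 1) ≠ 0 := by
  intro h
  have h1 : (1:ℝ) ≤ ‖((i:ℂ) + 1)‖ := by
    rw [show ((i:ℂ)+1) = ((i+1 : ℕ) : ℂ) by push_cast; ring, Complex.norm_natCast]
    exact_mod_cast Nat.one_le_iff_ne_zero.mpr (Nat.succ_ne_zero i)
  have h2 : ‖t / ((i:ℂ) + 1)‖ < 1 := by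
    rw [norm_div]
    calc ‖t‖ / ‖((i:ℂ) + 1)‖ ≤ ‖t‖ / 1 :=
          div_le_div_of_nonneg_left (norm_nonneg t) one_pos h1 |>.trans (le_refl _)
      _ < 1 := by rwa [div_one]
  have : t / ((i:ℂ) + 1) = 1 := by linear_combination -h
  rw [this] at h2
  simp at h2

theorem aux_gammaSeq (t : ℂ) (ht : ‖t‖ < 1) (n : ℕ) (hn : 1 ≤ n) :
    Complex.GammaSeq (1 - t) n =
      Complex.exp ((1 - t) * (Real.log n : ℂ) - (Real.log (n + 1) : ℂ)
        + ∑ i ∈ Finset.range (n + 1), -Complex.log (1 - t / (i + 1))) := by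
  have hne := aux_ne t ht
  have hjne : ∀ j : ℕ, ((j : ℂ) + 1) ≠ 0 := fun j => by
    have : ((j + 1 : ℕ) : ℂ) ≠ 0 := Nat.cast_ne_zero.mpr (Nat.succ_ne_zero j)
    rwa [Nat.cast_add, Nat.cast_one] at this
  have hprod : ∏ j ∈ Finset.range (n + 1), (1 - t + j)
      = ((Nat.factorial (n + 1) : ℕ) : ℂ)
        * ∏ j ∈ Finset.range (n + 1), (1 - t / (j + 1)) := by
    have h1 : ∀ j ∈ Finset.range (n + 1),
        (1 - t + (j:ℂ)) = ((j:ℂ) + 1) * (1 - t / (j + 1)) := by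
      intro j _
      rw [mul_sub, mul_one, mul_div_cancel₀ _ (hjne j)]
      ring
    rw [Finset.prod_congr rfl h1, Finset.prod_mul_distrib]
    congr 1
    rw [show ((Nat.factorial (n+1) : ℕ) : ℂ) = ∏ j ∈ Finset.range (n + 1), ((j : ℂ) + 1) by
      push_cast [← Finset.prod_range_add_one_eq_factorial]; norm_num]
  have hPne : (∏ j ∈ Finset.range (n + 1), (1 - t / (j + 1))) ≠ 0 :=
    Finset.prod_ne_zero_iff.mpr fun j _ => hne j
  have hnne : (n : ℂ) ≠ 0 := Nat.cast_ne_zero.mpr (by omega)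
  have e1 : Complex.exp ((1 - t) * (Real.log n : ℂ)) = (n : ℂ) ^ (1 - t) := by
    rw [Complex.cpow_def_of_ne_zero hnne, ← Complex.ofReal_natCast,
      Complex.ofReal_log (Nat.cast_nonneg n), mul_comm]
  have e2 : Complex.exp ((Real.log (n + 1) : ℂ)) = (n : ℂ) + 1 := by
    rw [Complex.ofReal_log (by positivity : (0:ℝ) ≤ (n:ℝ) + 1), Complex.exp_log (by
      push_cast; exact hjne n)]
    push_cast; ring
  have e3 : Complex.exp (∑ i ∈ Finset.range (n + 1), -Complex.log (1 - t / (i + 1)))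
      = (∏ j ∈ Finset.range (n + 1), (1 - t / (j + 1)))⁻¹ := by
    rw [Complex.exp_sum, ← Finset.prod_inv_distrib]
    exact Finset.prod_congr rfl fun j _ => by
      rw [Complex.exp_neg, Complex.exp_log (hne j)]
  rw [Complex.exp_add, Complex.exp_sub, e1, e2, e3, Complex.GammaSeq, hprod]
  set P := ∏ j ∈ Finset.range (n + 1), (1 - t / (j + 1)) with hP
  have hfac : ((Nat.factorial n : ℕ) : ℂ) ≠ 0 := Nat.cast_ne_zero.mpr (Nat.factorial_ne_zero n)
  rw [Nat.factorial_succ, Nat.cast_mul, show ((n + 1 : ℕ) : ℂ) = (n:ℂ) + 1 by push_cast; ring]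
  rw [mul_comm ((n:ℂ) + 1) ((Nat.factorial n : ℕ) : ℂ), mul_assoc,
    mul_comm ((n:ℂ) ^ (1 - t)) ((Nat.factorial n : ℕ) : ℂ), mul_div_mul_left _ _ hfac,
    div_mul_eq_div_mul_one_div, one_div]

theorem aux_log_tendsto : Tendsto (fun n : ℕ => Real.log (n + 1) - Real.log n) atTop (𝓝 0) := by
  have h1 : Tendsto (fun n : ℕ => ((n : ℝ) + 1) / n) atTop (𝓝 1) := by
    have := (tendsto_one_div_atTop_nhds_zero_nat (𝕜 := ℝ)).const_add 1
    rw [add_zero] at this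
    refine this.congr' ?_
    filter_upwards [eventually_ge_atTop 1] with n hn
    have : (n:ℝ) ≠ 0 := Nat.cast_ne_zero.mpr (by omega)
    field_simp
  have h2 := (Real.continuousAt_log one_ne_zero).tendsto.comp h1
  rw [Real.log_one] at h2
  refine h2.congr' ?_
  filter_upwards [eventually_ge_atTop 1] with n hn
  have hne : (n:ℝ) ≠ 0 := Nat.cast_ne_zero.mpr (by omega)
  simp only [Function.comp_apply]
  rw [Real.log_div (by positivity) hne]

theorem aux_harm (t : ℂ) : Tendsto
    (fun n : ℕ => ((∑ i ∈ Finset.range (n + 1), (1 / ((i:ℝ) + 1))) - Real.log n)) atTop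
    (𝓝 Real.eulerMascheroniConstant) := by
  have hh := Real.tendsto_harmonic_sub_log.comp (tendsto_add_atTop_nat 1)
  have := hh.add aux_log_tendsto
  rw [add_zero] at this
  refine this.congr fun n => ?_
  simp only [Function.comp_apply]
  have : ((harmonic (n + 1) : ℝ)) = ∑ i ∈ Finset.range (n + 1), (1 / ((i:ℝ) + 1)) := by
    rw [harmonic]
    push_cast
    exact Finset.sum_congr rfl fun i _ => by rw [one_div]
  rw [this]
  push_cast
  ring

/-- The Legendre series for the logarithm of the Gamma function: for `|t| < 1`,
`log Γ(1−t) = γ_EM·t + ∑_{n=2}^∞ (ζ(n)/n) t^n`, where the branch of the logarithm is the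
one vanishing at `t = 0`; equivalently, the series on the right is summable and its
exponential (times `exp(γ_EM t)`) equals `Γ(1−t)`. -/
theorem legendre_series_log_Gamma (t : ℂ) (ht : ‖t‖ < 1) :
    Summable (fun n : ℕ => riemannZeta (n + 2) / (n + 2) * t ^ (n + 2)) ∧
    Complex.Gamma (1 - t) =
      Complex.exp ((Real.eulerMascheroniConstant : ℂ) * t +
        ∑' n : ℕ, riemannZeta (n + 2) / (n + 2) * t ^ (n + 2)) := by
  have ha := aux_summable t ht
  -- summability of the zeta series
  have hfib : ∀ k : ℕ, HasSum (fun j : ℕ => (t / (j + 1)) ^ (k + 2) / ((k : ℂ) + 2))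
      (riemannZeta ((k : ℂ) + 2) / ((k : ℂ) + 2) * t ^ (k + 2)) := by
    intro k
    have hs := ha.prod_factor k
    rw [aux_fiber t k]
    exact hs.hasSum
  have hsum1 : HasSum (fun k : ℕ => riemannZeta ((k : ℂ) + 2) / ((k : ℂ) + 2) * t ^ (k + 2))
      (∑' p : ℕ × ℕ, (t / (p.2 + 1)) ^ (p.1 + 2) / ((p.1 : ℂ) + 2)) :=
    ha.hasSum.prod_fiberwise hfib
  refine ⟨hsum1.summable, ?_⟩
  -- the swapped family
  have ha' : Summable (fun p : ℕ × ℕ => (t / (p.1 + 1)) ^ (p.2 + 2) / ((p.2 : ℂ) + 2)) :=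
    (Equiv.prodComm ℕ ℕ).summable_iff.mpr ha
  have hgsum : Summable (fun j : ℕ => -Complex.log (1 - t / (j + 1)) - t / (j + 1)) := by
    have h1 : Summable (fun j : ℕ => ∑' k : ℕ, (t / (j + 1)) ^ (k + 2) / ((k : ℂ) + 2)) := by
      refine (ha'.hasSum.prod_fiberwise fun j => ?_).summable
      exact (ha'.prod_factor j).hasSum
    exact h1.congr fun j => (aux_log j t ht).tsum_eq
  -- identify the two tsums
  have hswap : (∑' j : ℕ, (-Complex.log (1 - t / (j + 1)) - t / (j + 1)))
      = ∑' k : ℕ, riemannZeta ((k : ℂ) + 2) / ((k : ℂ) + 2) * t ^ (k + 2) := by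
    have e1 : (∑' j : ℕ, (-Complex.log (1 - t / (j + 1)) - t / (j + 1)))
        = ∑' j : ℕ, ∑' k : ℕ, (t / (j + 1)) ^ (k + 2) / ((k : ℂ) + 2) :=
      tsum_congr fun j => ((aux_log j t ht).tsum_eq).symm
    have hcomm := Summable.tsum_comm' (f := fun (k j : ℕ) => (t / (j + 1)) ^ (k + 2) / ((k : ℂ) + 2))
      ha (fun k => ha.prod_factor k) (fun j => ha'.prod_factor j)
    rw [e1, hcomm]
    exact tsum_congr fun k => (hfib k).tsum_eq
  -- the limit of GammaSeq
  have hA : Tendsto (fun n : ℕ => (1 - t) * (Real.log n : ℂ) - (Real.log (n + 1) : ℂ)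
      + ∑ i ∈ Finset.range (n + 1), -Complex.log (1 - t / (i + 1))) atTop
      (𝓝 ((Real.eulerMascheroniConstant : ℂ) * t +
        ∑' n : ℕ, riemannZeta (n + 2) / (n + 2) * t ^ (n + 2))) := by
    have hB1 : Tendsto (fun n : ℕ =>
        t * (((∑ i ∈ Finset.range (n + 1), (1 / ((i:ℝ) + 1))) - Real.log n : ℝ) : ℂ)) atTop
        (𝓝 (t * (Real.eulerMascheroniConstant : ℂ))) :=
      ((Complex.continuous_ofReal.tendsto _).comp (aux_harm t)).const_mul t
    have hB2 : Tendsto (fun n : ℕ => ((Real.log n - Real.log (n + 1) : ℝ) : ℂ)) atTop (𝓝 0) := by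
      have h := (Complex.continuous_ofReal.tendsto _).comp aux_log_tendsto.neg
      rw [neg_zero, Complex.ofReal_zero] at h
      exact h.congr fun n => by
        rw [Function.comp_apply, Complex.ofReal_neg, Complex.ofReal_sub, Complex.ofReal_sub]
        ring
    have hB3 : Tendsto (fun n : ℕ =>
        ∑ i ∈ Finset.range (n + 1), (-Complex.log (1 - t / (i + 1)) - t / (i + 1))) atTop
        (𝓝 (∑' j : ℕ, (-Complex.log (1 - t / (j + 1)) - t / (j + 1)))) :=
      hgsum.hasSum.tendsto_sum_nat.comp (tendsto_add_atTop_nat 1)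
    have hB := (hB1.add hB2).add hB3
    rw [add_zero] at hB
    have hlim : t * (Real.eulerMascheroniConstant : ℂ)
        + ∑' j : ℕ, (-Complex.log (1 - t / (j + 1)) - t / (j + 1))
        = (Real.eulerMascheroniConstant : ℂ) * t
          + ∑' n : ℕ, riemannZeta (n + 2) / (n + 2) * t ^ (n + 2) := by
      rw [hswap, mul_comm]
    rw [hlim] at hB
    refine hB.congr fun n => ?_
    have hsum : (((∑ i ∈ Finset.range (n + 1), (1 / ((i:ℝ) + 1))) : ℝ) : ℂ)
        = ∑ i ∈ Finset.range (n + 1), 1 / ((i:ℂ) + 1) := by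
      push_cast
      rfl
    rw [Complex.ofReal_sub, Complex.ofReal_sub, hsum, mul_sub, Finset.mul_sum,
      Finset.sum_sub_distrib]
    simp_rw [mul_one_div]
    ring
  -- conclude
  have hexp := (Complex.continuous_exp.tendsto _).comp hA
  have hGam := Complex.GammaSeq_tendsto_Gamma (1 - t)
  refine tendsto_nhds_unique hGam (hexp.congr' ?_)
  filter_upwards [eventually_ge_atTop 1] with n hn
  exact (aux_gammaSeq t ht n hn).symm
end

section
/- For every natural number k and every complex z which is not a nonpositive integer, the k-th derivative of the reciprocal Gamma function satisfies (1/Γ)^{(k)}(z) = (1/Γ(z)) · B_k(−ψ^{(0)}(z), −ψ^{(1)}(z), …, −ψ^{(k−1)}(z)), where B_k is the k-th complete Bell polynomial and ψ^{(j)} denotes the j-th polygamma function. -/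
open Finset

/-- The complete Bell polynomials, evaluated on a sequence `x : ℕ → ℂ` (indexed from 1). -/
noncomputable def bellPoly : ℕ → (ℕ → ℂ) → ℂ
  | 0, _ => 1
  | (n + 1), x => ∑ k ∈ Finset.range (n + 1),
      (n.choose k : ℂ) * bellPoly (n - k) x * x (k + 1)
  termination_by n _ => n
  decreasing_by omega

/-- The digamma function `ψ⁽⁰⁾(z) = Γ'(z)/Γ(z)`. -/
noncomputable def digamma (z : ℂ) : ℂ := deriv Complex.Gamma z / Complex.Gamma z

/-- The polygamma functions `ψ⁽ʲ⁾ = (d/dz)ʲ ψ⁽⁰⁾`. -/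
noncomputable def polygamma (j : ℕ) (z : ℂ) : ℂ := iteratedDeriv j digamma z

/-!
On the complement `U` of the poles, `f = 1/Γ` satisfies `f' = f · g` with `g = -ψ`.
Differentiating this `n` times with the Leibniz rule gives
`f^{(n+1)} = ∑ C(n,k) f^{(k)} g^{(n-k)}`, which is, after inserting `f^{(k)} = f · B_k`
inductively, the defining recursion of the complete Bell polynomials. Since `1/Γ` is entire,
`U = {Γ ≠ 0} = {1/Γ ≠ 0}` is open.
-/

lemma bellPoly_succ (n : ℕ) (x : ℕ → ℂ) :
    bellPoly (n + 1) x = ∑ k ∈ range (n + 1), (n.choose k : ℂ) * bellPoly k x * x (n - k + 1) := by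
  rw [bellPoly, ← sum_range_reflect]
  refine sum_congr rfl fun k hk => ?_
  rw [mem_range] at hk
  rw [Nat.add_sub_cancel, Nat.sub_sub_self (by omega), Nat.choose_symm (by omega)]

/-- `bellPoly` never reads `x 0`, so the truncated `j - 1` at `j = 0` is harmless. -/
theorem iteratedDeriv_eq_mul_bellPoly_of_deriv_eq_mul {f g : ℂ → ℂ} {U : Set ℂ} (hU : IsOpen U)
    (hf : DifferentiableOn ℂ f U) (hg : DifferentiableOn ℂ g U)
    (hfg : ∀ w ∈ U, deriv f w = f w * g w) (n : ℕ) {z : ℂ} (hz : z ∈ U) :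
    iteratedDeriv n f z = f z * bellPoly n (fun j => iteratedDeriv (j - 1) g z) := by
  induction n using Nat.strong_induction_on generalizing z with
  | _ n ih =>
  obtain _ | n := n
  · simp [bellPoly]
  have hderiv : deriv f =ᶠ[nhds z] f * g :=
    Filter.eventually_of_mem (hU.mem_nhds hz) hfg
  rw [iteratedDeriv_succ', hderiv.iteratedDeriv_eq,
    iteratedDeriv_mul ((hf.contDiffOn hU).contDiffAt (hU.mem_nhds hz))
      ((hg.contDiffOn hU).contDiffAt (hU.mem_nhds hz)),
    bellPoly_succ, mul_sum]
  refine sum_congr rfl fun k hk => ?_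
  rw [ih k (by simpa [Nat.lt_succ_iff] using hk) hz, Nat.add_sub_cancel]
  ring

lemma isOpen_setOf_Gamma_ne_zero : IsOpen {w : ℂ | Complex.Gamma w ≠ 0} := by
  simpa using Complex.differentiable_one_div_Gamma.continuous.isOpen_preimage {y | y ≠ 0} isOpen_ne

lemma differentiableAt_Gamma_of_ne_zero {w : ℂ} (hw : Complex.Gamma w ≠ 0) :
    DifferentiableAt ℂ Complex.Gamma w :=
  Complex.differentiableAt_Gamma w fun m hm => hw ((Complex.Gamma_eq_zero_iff w).2 ⟨m, hm⟩)

lemma differentiableOn_digamma : DifferentiableOn ℂ digamma {w | Complex.Gamma w ≠ 0} := by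
  have hΓ : DifferentiableOn ℂ Complex.Gamma {w | Complex.Gamma w ≠ 0} :=
    fun w hw => (differentiableAt_Gamma_of_ne_zero hw).differentiableWithinAt
  exact (hΓ.deriv isOpen_setOf_Gamma_ne_zero).div hΓ fun w hw => hw

lemma deriv_inv_Gamma {w : ℂ} (hw : Complex.Gamma w ≠ 0) :
    deriv (fun w => (Complex.Gamma w)⁻¹) w = (Complex.Gamma w)⁻¹ * -digamma w := by
  rw [deriv_fun_inv'' (differentiableAt_Gamma_of_ne_zero hw) hw, digamma]
  field_simp

/-- For every `k ∈ ℕ` and `z ∉ ℤ_{≤0}`,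
`(1/Γ)^{(k)}(z) = (1/Γ(z)) · B_k(−ψ⁽⁰⁾(z), −ψ⁽¹⁾(z), …, −ψ⁽ᵏ⁻¹⁾(z))`. -/
theorem iteratedDeriv_one_div_Gamma (k : ℕ) (z : ℂ) (hz : ∀ n : ℕ, z ≠ -n) :
    iteratedDeriv k (fun w => (Complex.Gamma w)⁻¹) z =
      (Complex.Gamma z)⁻¹ * bellPoly k (fun j => -polygamma (j - 1) z) := by
  rw [iteratedDeriv_eq_mul_bellPoly_of_deriv_eq_mul isOpen_setOf_Gamma_ne_zero
    Complex.differentiable_one_div_Gamma.differentiableOn differentiableOn_digamma.neg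
    (fun w hw => deriv_inv_Gamma hw) k (Complex.Gamma_ne_zero hz)]
  simp only [iteratedDeriv_neg, polygamma]
end
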